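/- Let (Ω_α)_{α ∈ Ord} enumerate the infinite regular cardinals in increasing order (so Ω_0 = ℵ_0). Let Θ be an ordinal equipped with the club topology τ_c. Then for every nonzero ordinal α and every ξ < Θ, the rank satisfies ρ_{τ_c}(ξ) = α if and only if cf(ξ) = Ω_α; equivalently, for every α > 0, ξ ∈ d^α_{τ_c}(Θ) if and only if cf(ξ) ≥ Ω_α. -/

import Mathlib

open Ordinal Set

noncomputable section

universe u

/-! ## Basic topological notions (explicit topologies) -/

/-- The derived set (set of limit points) of `A` w.r.t. the topology `t`. -/
def dSet {X : Type u} (t : TopologicalSpace X) (A : Set X) : Set X :=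
  {x | ∀ U : Set X, t.IsOpen U → x ∈ U → ∃ y, y ∈ U ∩ A ∧ y ≠ x}

/-- Transfinite iterates of the derived-set operator, starting from the whole space. -/
def dIter {X : Type u} (t : TopologicalSpace X) (o : Ordinal.{u}) : Set X :=
  Ordinal.limitRecOn o Set.univ (fun _ ih => dSet t ih)
    (fun o _ ih => ⋂ (o' : Ordinal.{u}) (h : o' < o), ih o' h)

/-- The Cantor–Bendixson rank of a point: the least `ξ` with `x ∉ d^{ξ+1} X`. -/
def ptRank {X : Type u} (t : TopologicalSpace X) (x : X) : Ordinal.{u} :=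
  sInf {ξ : Ordinal.{u} | x ∉ dIter t (ξ + 1)}

/-- The rank of a space: `sup_{x ∈ X} (ρ(x) + 1)`. -/
def spRank (X : Type u) (t : TopologicalSpace X) : Ordinal.{u} :=
  ⨆ x : X, ptRank t x + 1

/-- A space is scattered if every nonempty subset has an isolated point. -/
def IsScattered {X : Type u} (t : TopologicalSpace X) : Prop :=
  ∀ A : Set X, A.Nonempty → ∃ x ∈ A, ∃ U : Set X, t.IsOpen U ∧ U ∩ A = {x}

/-- A `d`-map: continuous, open and pointwise discrete. -/
def IsDMap {X : Type u} {Y : Type*} (t : TopologicalSpace X) (s : TopologicalSpace Y)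
    (f : X → Y) : Prop :=
  @Continuous _ _ t s f ∧ @IsOpenMap _ _ t s f ∧
    ∀ y : Y, ∀ x : X, f x = y →
      ∃ U : Set X, t.IsOpen U ∧ x ∈ U ∧ ∀ z ∈ U, f z = y → z = x

/-! ## Hyperexponentials and hyperlogarithms -/

/-- The exponential `e ξ = -1 + ω^ξ`. -/
def eFun (x : Ordinal.{u}) : Ordinal.{u} := ω ^ x - 1

/-- `E` is the family of hyperexponentials: a family of normal functions with `E 1 = e`,
`E (α+β) = E α ∘ E β`, pointwise minimal among all such families. -/
def IsHyperexpFamily (E : Ordinal.{u} → Ordinal.{u} → Ordinal.{u}) : Prop :=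
  (∀ a, Order.IsNormal (E a)) ∧ E 1 = eFun ∧ (∀ a b, E (a + b) = E a ∘ E b) ∧
    ∀ F : Ordinal.{u} → Ordinal.{u} → Ordinal.{u},
      (∀ a, Order.IsNormal (F a)) → F 1 = eFun → (∀ a b, F (a + b) = F a ∘ F b) →
        ∀ a b, E a b ≤ F a b

/-- The end logarithm: `ℓ 0 = 0` and `ℓ ξ` is the unique `β` with `ξ = α + ω^β`. -/
def ellFun (x : Ordinal.{u}) : Ordinal.{u} :=
  if x = 0 then 0 else sInf {b : Ordinal.{u} | ∃ a, x = a + ω ^ b}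

/-- An initial function maps initial segments onto initial segments. -/
def IsInitialFun (f : Ordinal.{u} → Ordinal.{u}) : Prop :=
  ∀ o : Ordinal.{u}, ∃ o' : Ordinal.{u}, f '' Set.Iio o = Set.Iio o'

/-- `L` is the family of hyperlogarithms: a family of initial functions with `L 1 = ℓ`,
`L (α+β) = L β ∘ L α`, pointwise maximal among all such families. -/
def IsHyperlogFamily (L : Ordinal.{u} → Ordinal.{u} → Ordinal.{u}) : Prop :=
  (∀ a, IsInitialFun (L a)) ∧ L 1 = ellFun ∧ (∀ a b, L (a + b) = L b ∘ L a) ∧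
    ∀ M : Ordinal.{u} → Ordinal.{u} → Ordinal.{u},
      (∀ a, IsInitialFun (M a)) → M 1 = ellFun → (∀ a b, M (a + b) = M b ∘ M a) →
        ∀ a b, M a b ≤ L a b

/-! ## Icard topologies -/

/-- The generalized Icard topology `τ_λ` based on a space `(X, t)`, relative to a family `L`
of hyperlogarithms: the least topology containing `t` and all sets
`(α, β]_ξ = {x | α < ℓ^ξ ρ_t(x) ≤ β}` (including `α = -1`, i.e. `[0, β]_ξ`), for `ξ < λ`. -/
def IcardTop {X : Type u} (L : Ordinal.{u} → Ordinal.{u} → Ordinal.{u})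
    (t : TopologicalSpace X) (lam : Ordinal.{u}) : TopologicalSpace X :=
  t ⊓ TopologicalSpace.generateFrom
    {S : Set X | ∃ ξ < lam,
      (∃ b : Ordinal.{u}, S = {x | L ξ (ptRank t x) ≤ b}) ∨
      (∃ a b : Ordinal.{u}, a < b ∧ S = {x | a < L ξ (ptRank t x) ∧ L ξ (ptRank t x) ≤ b})}

/-! ## Ordinal spaces -/

/-- The ordinal corresponding to a point of `Θ.ToType`. -/
def ordVal {Θ : Ordinal.{u}} (x : Θ.ToType) : Ordinal.{u} :=
  @Ordinal.typein Θ.ToType (· < ·) isWellOrder_lt x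

/-- The left topology `I₀` on (the canonical type of order type) `Θ`, generated by the
intervals `[0, β]`. -/
def leftTop (Θ : Ordinal.{u}) : TopologicalSpace Θ.ToType :=
  TopologicalSpace.generateFrom {S : Set Θ.ToType | ∃ b : Θ.ToType, S = Set.Iic b}

/-- The interval topology `I₁` on `Θ`, generated by the sets `[0, β]` and `(α, β]`. -/
def intervalTop (Θ : Ordinal.{u}) : TopologicalSpace Θ.ToType :=
  TopologicalSpace.generateFrom
    {S : Set Θ.ToType | (∃ b, S = Set.Iic b) ∨ ∃ a b : Θ.ToType, S = Set.Ioc a b}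

/-- The Icard topology `I_λ = (I₀)_λ` on the ordinal `Θ`: the least topology containing the
left topology and all sets `{x < Θ | α < ℓ^ξ x ≤ β}` for `ξ < λ`. -/
def ordIcard (L : Ordinal.{u} → Ordinal.{u} → Ordinal.{u}) (Θ lam : Ordinal.{u}) :
    TopologicalSpace Θ.ToType :=
  leftTop Θ ⊓ TopologicalSpace.generateFrom
    {S : Set Θ.ToType | ∃ ξ < lam,
      (∃ b : Ordinal.{u}, S = {x | L ξ (ordVal x) ≤ b}) ∨
      (∃ a b : Ordinal.{u}, a < b ∧ S = {x | a < L ξ (ordVal x) ∧ L ξ (ordVal x) ≤ b})}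

/-! ## Modal logic: GL and topological (d-)semantics -/

/-- Formulas of the basic modal language. -/
inductive Fml : Type
  | bot : Fml
  | var : ℕ → Fml
  | imp : Fml → Fml → Fml
  | box : Fml → Fml

namespace Fml

/-- Negation. -/
def neg (p : Fml) : Fml := p.imp .bot

/-- Diamond. -/
def dia (p : Fml) : Fml := (p.neg.box).neg

end Fml

/-- The valuation determined by an assignment `V` of sets to propositional variables, in the
`d`-semantics: `⟦◇φ⟧ = d⟦φ⟧`, i.e. `⟦◻φ⟧` is the complement of the derived set of the
complement of `⟦φ⟧`. -/
def fval {X : Type u} (t : TopologicalSpace X) (V : ℕ → Set X) : Fml → Set X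
  | .bot => ∅
  | .var n => V n
  | .imp p q => (fval t V p)ᶜ ∪ fval t V q
  | .box p => (dSet t (fval t V p)ᶜ)ᶜ

/-- Classical tautologies (boxed formulas and variables treated as atoms). -/
def Tautology (φ : Fml) : Prop :=
  ∀ v : Fml → Bool, v .bot = false → (∀ p q : Fml, v (p.imp q) = (!(v p) || v q)) →
    v φ = true

/-- Provability in the Gödel–Löb provability logic `GL`. -/
inductive GLProv : Fml → Prop
  | taut {φ : Fml} : Tautology φ → GLProv φ
  | axK (p q : Fml) : GLProv (((p.imp q).box).imp ((p.box).imp q.box))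
  | axLob (p : Fml) : GLProv ((((p.box).imp p).box).imp p.box)
  | mp {p q : Fml} : GLProv (p.imp q) → GLProv p → GLProv q
  | nec {p : Fml} : GLProv p → GLProv p.box

/-- A set of formulas is GL-consistent if no finite conjunction of its members provably
implies `⊥`. -/
def GLConsistent (Γ : Set Fml) : Prop :=
  ¬ ∃ l : List Fml, (∀ φ ∈ l, φ ∈ Γ) ∧ GLProv (l.foldr .imp .bot)

/-- `Γ` is satisfied in the space `(X, t)`. -/
def SatisfiedIn {X : Type u} (t : TopologicalSpace X) (Γ : Set Fml) : Prop :=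
  ∃ (V : ℕ → Set X) (x : X), ∀ φ ∈ Γ, x ∈ fval t V φ

/-- `GL` is strongly complete with respect to `(X, t)`. -/
def StronglyCompleteFor {X : Type u} (t : TopologicalSpace X) : Prop :=
  ∀ Γ : Set Fml, GLConsistent Γ → SatisfiedIn t Γ

/-- Validity of a formula in a space under the `d`-semantics. -/
def ValidIn {X : Type u} (t : TopologicalSpace X) (φ : Fml) : Prop :=
  ∀ V : ℕ → Set X, fval t V φ = Set.univ

/-! ## Trees and ω-bouquets -/

/-- The upset topology of a relation: opens are the `R`-upward closed sets. -/
def upTop {T : Type u} (R : T → T → Prop) : TopologicalSpace T where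
  IsOpen U := ∀ x ∈ U, ∀ y, R x y → y ∈ U
  isOpen_univ := fun x _ y _ => trivial
  isOpen_inter := fun s t hs ht x hx y hR => ⟨hs x hx.1 y hR, ht x hx.2 y hR⟩
  isOpen_sUnion := fun S hS x hx y hR => by
    obtain ⟨s, hsS, hxs⟩ := hx
    exact ⟨s, hsS, hS s hsS x hxs y hR⟩

/-- A countable, converse well-founded tree. -/
structure IsOmegaTree {T : Type u} (R : T → T → Prop) : Prop where
  countable : Countable T
  trans : ∀ a b c, R a b → R b c → R a c
  irrefl : ∀ a, ¬ R a a
  predWellOrdered : ∀ t : T, IsWellOrder {s : T // R s t} (fun a b => R a.1 b.1)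
  root : ∃! r : T, ∀ s : T, ¬ R s r
  converseWellFounded : WellFounded (fun a b : T => R b a)

/-- The daughters (immediate successors) of a node. -/
def daughters {T : Type u} (R : T → T → Prop) (w : T) : Set T :=
  {v | R w v ∧ ¬ ∃ u, R w u ∧ R u v}

/-- The bouquet topology `σ_R`: the least topology extending the upset topology such that
whenever `w` has limit rank, `(v_i)` enumerates the daughters of `w` without repetition and
`n < ω`, the set `{w} ∪ ⋃_{i > n} ({v_i} ∪ R(v_i))` is open. -/
def sigmaTop {T : Type u} (R : T → T → Prop) : TopologicalSpace T :=
  upTop R ⊓ TopologicalSpace.generateFrom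
    {S : Set T | ∃ w : T, Order.IsSuccLimit (ptRank (upTop R) w) ∧
      ∃ v : ℕ → T, Function.Injective v ∧ Set.range v = daughters R w ∧
        ∃ n : ℕ, S = {w} ∪ ⋃ (i : ℕ) (_ : n < i), ({v i} ∪ {u | R (v i) u})}

/-! ## The club topology (via its neighborhood characterization) -/

/-- `C` is a club in (i.e. a closed unbounded subset of) the point `x`. -/
def IsClubIn {Θ : Ordinal.{u}} (C : Set Θ.ToType) (x : Θ.ToType) : Prop :=
  (∀ y ∈ C, y < x) ∧ (∀ z, z < x → ∃ y ∈ C, z < y) ∧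
    ∀ z, z < x → (∃ w, w < z) → (∀ w, w < z → ∃ y ∈ C, w < y ∧ y < z) → z ∈ C

/-- `t` is the club topology on `Θ`: a set `U` is a neighborhood of a point `x ∈ U` iff
`U` contains a club in `x` or `cf(x) < ℵ₁`. -/
def IsClubTop (Θ : Ordinal.{u}) (t : TopologicalSpace Θ.ToType) : Prop :=
  ∀ (U : Set Θ.ToType) (x : Θ.ToType), x ∈ U →
    (U ∈ @nhds _ t x ↔
      (Ordinal.cof (ordVal x) < Cardinal.aleph 1 ∨ ∃ C ⊆ U, IsClubIn C x))

/-- The increasing enumeration `Ω` of the infinite regular cardinals (as cardinals). -/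
def regularEnum (α : Ordinal.{u}) : Cardinal.{u} :=
  (Ordinal.enumOrd {o : Ordinal.{u} | ∃ c : Cardinal.{u}, c.IsRegular ∧ o = c.ord} α).card

/-!
Write `cf` for cofinality. In the club topology a point `ξ` is a limit point of `A` iff
`cf ξ > ℵ₀` and `A` meets every club in `ξ`. For a regular `κ < cf ξ`, every club in `ξ` contains
a point of cofinality exactly `κ`: the supremum of its first `κ` elements. Conversely, when
`cf ξ > ℵ₀`, the accumulation points of a fundamental sequence of `ξ` form a club in `ξ` all of
whose points have cofinality `< cf ξ`. Hence `d {cf ≥ κ} = {cf > κ}` for regular `κ`, and by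
induction `d^α Θ = {ξ | Ω_β < cf ξ for all β < α}`. As every uncountable cofinality is some `Ω_γ`,
this set is `{cf ≥ Ω_α}` for `α ≠ 0`, and the rank of a point of cofinality `Ω_γ` is `γ`.
-/

open Cardinal

namespace Ordinal

theorem iSup_Iio_lt_of_card_lt_cof {a ξ : Ordinal.{u}} {f : Iio a → Ordinal.{u}}
    (ha : a.card < ξ.cof) (hf : ∀ i, f i < ξ) : ⨆ i, f i < ξ := by
  refine lift_iSup_lt_of_lt_cof ?_ hf
  simpa [Cardinal.mk_Iio_ordinal, ← lift_cof, ← lift_card] using ha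

theorem cof_le_card_of_forall_exists_lt {a z : Ordinal.{u}} {f : Iio a → Ordinal.{u}}
    (hf : ∀ i, f i < z) (hcof : ∀ w < z, ∃ i, w < f i) : z.cof ≤ a.card := by
  by_contra! h
  obtain ⟨i, hi⟩ := hcof _ (iSup_Iio_lt_of_card_lt_cof h hf)
  exact hi.not_ge (Ordinal.le_iSup f i)

theorem not_bddAbove_union_Ici (S : Set Ordinal.{u}) (ξ : Ordinal.{u}) :
    ¬ BddAbove (S ∪ Ici ξ) :=
  fun h => not_bddAbove_Ici ξ (h.mono subset_union_right)

end Ordinal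

structure IsClubBelow (S : Set Ordinal.{u}) (ξ : Ordinal.{u}) : Prop where
  lt : ∀ s ∈ S, s < ξ
  exists_gt : ∀ z < ξ, ∃ s ∈ S, z < s
  mem_of_accumulates : ∀ z < ξ, 0 < z → (∀ w < z, ∃ s ∈ S, w < s ∧ s < z) → z ∈ S

namespace IsClubBelow

variable {S : Set Ordinal.{u}} {ξ : Ordinal.{u}}

/- Padding `S` with `Ici ξ` makes it unbounded, so that `enumOrd` lists the elements of `S` in
increasing order before it reaches `ξ`. -/
theorem enumOrd_mem (hS : IsClubBelow S ξ) {i : Ordinal.{u}} (hi : i.card < ξ.cof) :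
    enumOrd (S ∪ Ici ξ) i ∈ S := by
  induction i using WellFoundedLT.induction with
  | _ i ih =>
    have hlt : ∀ j : Iio i, enumOrd (S ∪ Ici ξ) j < ξ := fun j =>
      hS.lt _ (ih j j.2 ((card_le_card j.2.le).trans_lt hi))
    obtain ⟨s, hs, hgt⟩ := hS.exists_gt _ (iSup_Iio_lt_of_card_lt_cof hi hlt)
    have hle : enumOrd (S ∪ Ici ξ) i ≤ s := enumOrd_le_of_forall_lt (Or.inl hs) fun j hj =>
      (Ordinal.le_iSup (fun j : Iio i => enumOrd (S ∪ Ici ξ) j) ⟨j, hj⟩).trans_lt hgt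
    exact (Ordinal.enumOrd_mem (not_bddAbove_union_Ici S ξ) i).resolve_right
      (hle.trans_lt (hS.lt s hs)).not_ge

theorem exists_cof_eq (hS : IsClubBelow S ξ) {κ : Cardinal.{u}} (hκ : κ.IsRegular)
    (hκξ : κ < ξ.cof) : ∃ s ∈ S, s.cof = κ := by
  set g : Iio κ.ord → Ordinal.{u} := fun i => enumOrd (S ∪ Ici ξ) i
  have hg : StrictMono g :=
    (enumOrd_strictMono (not_bddAbove_union_Ici S ξ)).comp (Subtype.strictMono_coe _)
  have hgS : ∀ i, g i ∈ S := fun i => hS.enumOrd_mem ((lt_ord.1 i.2).trans hκξ)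
  have hlim : Order.IsSuccLimit κ.ord := isSuccLimit_ord hκ.aleph0_le
  have hlt_iSup : ∀ i, g i < ⨆ i, g i := fun i =>
    (hg (show i < ⟨Order.succ i.1, hlim.succ_lt i.2⟩ from Order.lt_succ i.1)).trans_le
      (Ordinal.le_iSup g _)
  refine ⟨⨆ i, g i, hS.mem_of_accumulates _ ?_ ?_ fun w hw => ?_, ?_⟩
  · exact iSup_Iio_lt_of_card_lt_cof (by rwa [card_ord]) fun i => hS.lt _ (hgS i)
  · exact pos_of_gt (hlt_iSup ⟨0, hlim.pos⟩)
  · obtain ⟨i, hi⟩ := Ordinal.lt_iSup_iff.1 hw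
    exact ⟨g i, hgS i, hi, hlt_iSup i⟩
  · rw [cof_iSup_Iio hg hlim.isSuccPrelimit, hκ.cof_ord]

end IsClubBelow

def accPtsBelow (C : Set Ordinal.{u}) (ξ : Ordinal.{u}) : Set Ordinal.{u} :=
  {z | z < ξ ∧ 0 < z ∧ ∀ w < z, ∃ c ∈ C, w < c ∧ c < z}

theorem isClubBelow_accPtsBelow {C : Set Ordinal.{u}} {ξ : Ordinal.{u}}
    (hCξ : ∀ c ∈ C, c < ξ) (hC : ∀ w < ξ, ∃ c ∈ C, w < c) (hξ : ℵ₀ < ξ.cof) :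
    IsClubBelow (accPtsBelow C ξ) ξ where
  lt _ hz := hz.1
  exists_gt w hw := by
    choose! next hnextC hnext using hC
    set seq : ℕ → Ordinal.{u} := fun n => next^[n + 1] w
    have hseqC : ∀ n, seq n ∈ C := by
      intro n
      induction n with
      | zero => exact hnextC w hw
      | succ n ih =>
        simp only [seq, Function.iterate_succ_apply'] at ih ⊢
        exact hnextC _ (hCξ _ ih)
    have hseq : ∀ n, seq n < seq (n + 1) := fun n => by
      simp only [seq, Function.iterate_succ_apply' next (n + 1)]
      exact hnext _ (hCξ _ (hseqC n))
    have hlt_iSup : ∀ n, seq n < ⨆ n, seq n := fun n =>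
      (hseq n).trans_le (Ordinal.le_iSup seq _)
    have hw_lt : w < ⨆ n, seq n := (hnext w hw).trans (hlt_iSup 0)
    refine ⟨⨆ n, seq n, ⟨?_, pos_of_gt hw_lt, fun v hv => ?_⟩, hw_lt⟩
    · exact Ordinal.lift_iSup_lt_of_lt_cof (by simpa using hξ) fun n => hCξ _ (hseqC n)
    · obtain ⟨n, hn⟩ := Ordinal.lt_iSup_iff.1 hv
      exact ⟨seq n, hseqC n, hn, hlt_iSup n⟩
  mem_of_accumulates z hz hz0 hacc := by
    refine ⟨hz, hz0, fun w hw => ?_⟩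
    obtain ⟨s, hs, hws, hsz⟩ := hacc w hw
    obtain ⟨c, hc, hwc, hcs⟩ := hs.2.2 w hws
    exact ⟨c, hc, hwc, hcs.trans hsz⟩

/- The terms of the sequence below `z` are those of index less than the least `i₀` with
`z ≤ f i₀`, and they are cofinal in `z`; hence `cf z ≤ card i₀ < cf ξ`. -/
theorem cof_lt_of_mem_accPtsBelow_range {ξ z : Ordinal.{u}} {f : Iio ξ.cof.ord → Iio ξ}
    (hf : IsFundamentalSeq f) (hz : z ∈ accPtsBelow (range fun i => (f i).1) ξ) :
    z.cof < ξ.cof := by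
  obtain ⟨hzξ, -, hacc⟩ := hz
  obtain ⟨-, ⟨i, rfl⟩, hi⟩ := hf.isCofinal_range ⟨z, hzξ⟩
  set T : Set (Iio ξ.cof.ord) := {i | z ≤ f i}
  have hT : T.Nonempty := ⟨i, hi⟩
  set i₀ := wellFounded_lt.min T hT
  have hi₀ : z ≤ f i₀ := wellFounded_lt.min_mem T hT
  let g : Iio i₀.1 → Ordinal.{u} := fun j => f ⟨j, mem_Iio.2 (j.2.trans i₀.2)⟩
  refine (cof_le_card_of_forall_exists_lt (f := g) (fun j => ?_) fun w hw => ?_).trans_lt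
    (lt_ord.1 i₀.2)
  · exact lt_of_not_ge fun h => wellFounded_lt.not_lt_min T (x := ⟨j, _⟩) h j.2
  · obtain ⟨-, ⟨k, rfl⟩, hwk, hkz⟩ := hacc w hw
    have hk : k < i₀ := lt_of_not_ge fun h =>
      (hkz.trans_le (hi₀.trans (hf.strictMono.monotone h))).false
    exact ⟨⟨k, hk⟩, hwk⟩

theorem exists_isClubBelow_forall_cof_lt {ξ : Ordinal.{u}} (hξ : ℵ₀ < ξ.cof) :
    ∃ S, IsClubBelow S ξ ∧ ∀ s ∈ S, s.cof < ξ.cof := by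
  obtain ⟨f, hf⟩ := exists_isFundamentalSeq (o := ξ) rfl
  refine ⟨_, isClubBelow_accPtsBelow ?_ ?_ hξ, fun s hs => cof_lt_of_mem_accPtsBelow_range hf hs⟩
  · rintro _ ⟨i, rfl⟩
    exact (f i).2
  · intro w hw
    have hw1 : w + 1 < ξ := (one_lt_cof_iff.1 (one_lt_aleph0.trans hξ)).add_one_lt hw
    obtain ⟨-, ⟨i, rfl⟩, hi⟩ := hf.isCofinal_range ⟨w + 1, hw1⟩
    exact ⟨f i, ⟨i, rfl⟩, Order.add_one_le_iff.1 hi⟩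

section ordVal

variable {Θ : Ordinal.{u}}

theorem ordVal_lt_ordVal {x y : Θ.ToType} : ordVal x < ordVal y ↔ x < y :=
  typein_lt_typein _

theorem ordVal_lt (x : Θ.ToType) : ordVal x < Θ :=
  typein_lt_self x

theorem exists_ordVal_eq {o : Ordinal.{u}} (h : o < Θ) : ∃ x : Θ.ToType, ordVal x = o :=
  typein_surj _ (by rwa [type_toType])

theorem ordVal_pos_iff {z : Θ.ToType} : 0 < ordVal z ↔ ∃ w, w < z := by
  refine ⟨fun h => ?_, fun ⟨w, hw⟩ => pos_of_gt (ordVal_lt_ordVal.2 hw)⟩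
  obtain ⟨w, hw⟩ := exists_ordVal_eq (h.trans (ordVal_lt z))
  exact ⟨w, ordVal_lt_ordVal.1 (hw ▸ h)⟩

theorem IsClubIn.isClubBelow_image {C : Set Θ.ToType} {x : Θ.ToType} (h : IsClubIn C x) :
    IsClubBelow (ordVal '' C) (ordVal x) where
  lt := by
    rintro _ ⟨y, hy, rfl⟩
    exact ordVal_lt_ordVal.2 (h.1 y hy)
  exists_gt z hz := by
    obtain ⟨w, rfl⟩ := exists_ordVal_eq (hz.trans (ordVal_lt x))
    obtain ⟨y, hyC, hwy⟩ := h.2.1 w (ordVal_lt_ordVal.1 hz)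
    exact ⟨ordVal y, mem_image_of_mem _ hyC, ordVal_lt_ordVal.2 hwy⟩
  mem_of_accumulates z hz hz0 hacc := by
    obtain ⟨w, rfl⟩ := exists_ordVal_eq (hz.trans (ordVal_lt x))
    refine mem_image_of_mem _
      (h.2.2 w (ordVal_lt_ordVal.1 hz) (ordVal_pos_iff.1 hz0) fun v hv => ?_)
    obtain ⟨_, ⟨y, hyC, rfl⟩, hvy, hyw⟩ := hacc (ordVal v) (ordVal_lt_ordVal.2 hv)
    exact ⟨y, hyC, ordVal_lt_ordVal.1 hvy, ordVal_lt_ordVal.1 hyw⟩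

theorem IsClubBelow.isClubIn_preimage {S : Set Ordinal.{u}} {x : Θ.ToType}
    (h : IsClubBelow S (ordVal x)) : IsClubIn (ordVal ⁻¹' S) x := by
  refine ⟨fun y hy => ordVal_lt_ordVal.1 (h.lt _ hy), fun z hz => ?_, fun z hz hz0 hacc => ?_⟩
  · obtain ⟨s, hs, hzs⟩ := h.exists_gt (ordVal z) (ordVal_lt_ordVal.2 hz)
    obtain ⟨y, rfl⟩ := exists_ordVal_eq ((h.lt s hs).trans (ordVal_lt x))
    exact ⟨y, hs, ordVal_lt_ordVal.1 hzs⟩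
  · refine h.mem_of_accumulates _ (ordVal_lt_ordVal.2 hz) (ordVal_pos_iff.2 hz0) fun v hv => ?_
    obtain ⟨w, rfl⟩ := exists_ordVal_eq (hv.trans (ordVal_lt z))
    obtain ⟨y, hy, hwy, hyz⟩ := hacc w (ordVal_lt_ordVal.1 hv)
    exact ⟨ordVal y, hy, ordVal_lt_ordVal.2 hwy, ordVal_lt_ordVal.2 hyz⟩

end ordVal

theorem dSet_eq_derivedSet {X : Type u} (t : TopologicalSpace X) (A : Set X) :
    dSet t A = @derivedSet X t A := by
  let := t
  ext x
  refine ⟨fun h => accPt_iff_nhds.2 fun U hU => ?_,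
    fun h U hU hxU => accPt_iff_nhds.1 h U (IsOpen.mem_nhds hU hxU)⟩
  obtain ⟨V, hVU, hV, hxV⟩ := mem_nhds_iff.1 hU
  obtain ⟨y, ⟨hyV, hyA⟩, hyx⟩ := h V hV hxV
  exact ⟨y, ⟨hVU hyV, hyA⟩, hyx⟩

section dIter

variable {X : Type u} (t : TopologicalSpace X)

theorem dIter_zero : dIter t 0 = Set.univ :=
  limitRecOn_zero _ _ _

theorem dIter_add_one (o : Ordinal.{u}) : dIter t (o + 1) = dSet t (dIter t o) :=
  limitRecOn_add_one _ _ _ _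

theorem dIter_of_isSuccLimit {o : Ordinal.{u}} (ho : Order.IsSuccLimit o) :
    dIter t o = ⋂ o' < o, dIter t o' :=
  limitRecOn_limit _ _ _ _ ho

end dIter

theorem not_bddAbove_setOf_ord_isRegular :
    ¬ BddAbove {o : Ordinal.{u} | ∃ c : Cardinal.{u}, c.IsRegular ∧ o = c.ord} := by
  rw [not_bddAbove_iff]
  intro a
  refine ⟨(Order.succ (max a.card ℵ₀)).ord, ⟨_, isRegular_succ (le_max_right _ _), rfl⟩, ?_⟩
  exact lt_ord.2 ((le_max_left _ _).trans_lt (Order.lt_succ _))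

theorem ord_regularEnum (α : Ordinal.{u}) :
    (regularEnum α).ord = enumOrd {o | ∃ c : Cardinal.{u}, c.IsRegular ∧ o = c.ord} α := by
  obtain ⟨c, -, hc⟩ := enumOrd_mem not_bddAbove_setOf_ord_isRegular α
  rw [regularEnum, hc, card_ord]

theorem isRegular_regularEnum (α : Ordinal.{u}) : (regularEnum α).IsRegular := by
  obtain ⟨c, hc, hco⟩ := enumOrd_mem not_bddAbove_setOf_ord_isRegular α
  rwa [regularEnum, hco, card_ord]

theorem regularEnum_strictMono : StrictMono regularEnum.{u} := fun a b h => by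
  rw [← ord_lt_ord, ord_regularEnum, ord_regularEnum]
  exact enumOrd_strictMono not_bddAbove_setOf_ord_isRegular h

theorem exists_regularEnum_eq {c : Cardinal.{u}} (hc : c.IsRegular) :
    ∃ α, regularEnum α = c := by
  obtain ⟨α, hα⟩ := enumOrd_surjective not_bddAbove_setOf_ord_isRegular ⟨c, hc, rfl⟩
  exact ⟨α, by rw [regularEnum, hα, card_ord]⟩

theorem regularEnum_zero : regularEnum 0 = ℵ₀ := by
  obtain ⟨γ, hγ⟩ := exists_regularEnum_eq isRegular_aleph0
  exact le_antisymm (hγ ▸ regularEnum_strictMono.monotone zero_le)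
    (isRegular_regularEnum 0).aleph0_le

theorem exists_regularEnum_eq_cof {o : Ordinal.{u}} (h : ℵ₀ < o.cof) :
    ∃ γ, regularEnum γ = o.cof :=
  exists_regularEnum_eq (isRegular_cof (one_lt_cof_iff.1 (one_lt_aleph0.trans h)))

theorem regularEnum_le_cof_iff {o α : Ordinal.{u}} (hα : α ≠ 0) :
    regularEnum α ≤ o.cof ↔ ∀ β < α, regularEnum β < o.cof := by
  refine ⟨fun h β hβ => (regularEnum_strictMono hβ).trans_le h, fun h => ?_⟩
  obtain ⟨γ, hγ⟩ := exists_regularEnum_eq_cof (regularEnum_zero ▸ h 0 (pos_iff_ne_zero.2 hα))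
  rw [← hγ, regularEnum_strictMono.le_iff_le]
  by_contra! hγα
  exact (h γ hγα).ne hγ

theorem sInf_setOf_cof_le_regularEnum_eq_iff (o : Ordinal.{u}) {α : Ordinal.{u}} (hα : α ≠ 0) :
    sInf {ξ | o.cof ≤ regularEnum ξ} = α ↔ o.cof = regularEnum α := by
  by_cases h : ℵ₀ < o.cof
  · obtain ⟨γ, hγ⟩ := exists_regularEnum_eq_cof h
    simp_rw [← hγ, regularEnum_strictMono.le_iff_le, regularEnum_strictMono.injective.eq_iff]
    rw [show {ξ | γ ≤ ξ} = Ici γ from rfl, csInf_Ici]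
  · have h0 : sInf {ξ | o.cof ≤ regularEnum ξ} = 0 := nonpos_iff_eq_zero.1
      (csInf_le' (show o.cof ≤ regularEnum 0 by rwa [regularEnum_zero, ← not_lt]))
    rw [h0]
    refine iff_of_false (Ne.symm hα) fun he => h ?_
    rw [he, ← regularEnum_zero]
    exact regularEnum_strictMono (pos_iff_ne_zero.2 hα)

section clubTop

variable {Θ : Ordinal.{u}} {tc : TopologicalSpace Θ.ToType}

theorem mem_dSet_iff (htc : IsClubTop Θ tc) {A : Set Θ.ToType} {x : Θ.ToType} :
    x ∈ dSet tc A ↔ ℵ₀ < (ordVal x).cof ∧ ∀ C, IsClubIn C x → (C ∩ A).Nonempty := by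
  rw [dSet_eq_derivedSet]
  let := tc
  rw [mem_derivedSet, accPt_iff_nhds]
  constructor
  · intro h
    have hcof : ℵ₀ < (ordVal x).cof := by
      by_contra! hle
      obtain ⟨y, ⟨hyx, -⟩, hne⟩ := h {x} ((htc {x} x rfl).2 (Or.inl (by simpa using hle)))
      exact hne hyx
    refine ⟨hcof, fun C hC => ?_⟩
    obtain ⟨y, ⟨hyC | hyC, hyA⟩, hne⟩ :=
      h (insert x C) ((htc _ x (mem_insert x C)).2 (Or.inr ⟨C, subset_insert x C, hC⟩))
    · exact absurd hyC hne
    · exact ⟨y, hyC, hyA⟩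
  · rintro ⟨hcof, hmeet⟩ U hU
    obtain hlt | ⟨C, hCU, hC⟩ := (htc U x (mem_of_mem_nhds hU)).1 hU
    · exact absurd hcof (by simpa using hlt)
    · obtain ⟨y, hyC, hyA⟩ := hmeet C hC
      exact ⟨y, ⟨hCU hyC, hyA⟩, (hC.1 y hyC).ne⟩

theorem mem_dSet_setOf_le_cof_iff (htc : IsClubTop Θ tc) {κ : Cardinal.{u}} (hκ : κ.IsRegular)
    {x : Θ.ToType} : x ∈ dSet tc {y | κ ≤ (ordVal y).cof} ↔ κ < (ordVal x).cof := by
  rw [mem_dSet_iff htc]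
  constructor
  · rintro ⟨hcof, hmeet⟩
    by_contra! hle
    obtain ⟨S, hS, hSlt⟩ := exists_isClubBelow_forall_cof_lt hcof
    obtain ⟨y, hyS, hy⟩ := hmeet _ hS.isClubIn_preimage
    exact (hSlt _ hyS).not_ge (hle.trans hy)
  · intro h
    refine ⟨hκ.aleph0_le.trans_lt h, fun C hC => ?_⟩
    obtain ⟨_, ⟨y, hyC, rfl⟩, hy⟩ := hC.isClubBelow_image.exists_cof_eq hκ h
    exact ⟨y, hyC, hy.ge⟩

theorem mem_dSet_univ_iff (htc : IsClubTop Θ tc) {x : Θ.ToType} :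
    x ∈ dSet tc Set.univ ↔ ℵ₀ < (ordVal x).cof := by
  refine ⟨fun h => ((mem_dSet_iff htc).1 h).1, fun h => ?_⟩
  have hx := (mem_dSet_setOf_le_cof_iff htc isRegular_aleph0).2 h
  rw [dSet_eq_derivedSet] at hx ⊢
  exact derivedSet_mono _ _ (subset_univ _) hx

theorem mem_dIter_iff_forall_lt (htc : IsClubTop Θ tc) (α : Ordinal.{u}) (x : Θ.ToType) :
    x ∈ dIter tc α ↔ ∀ β < α, regularEnum β < (ordVal x).cof := by
  induction α using limitRecOn generalizing x with
  | zero => simp [dIter_zero]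
  | add_one α ih =>
    simp_rw [Order.lt_add_one_iff, dIter_add_one]
    rcases eq_or_ne α 0 with rfl | hα
    · simp [dIter_zero, mem_dSet_univ_iff htc, regularEnum_zero]
    · have hset : dIter tc α = {y | regularEnum α ≤ (ordVal y).cof} :=
        ext fun y => (ih y).trans (regularEnum_le_cof_iff hα).symm
      rw [hset, mem_dSet_setOf_le_cof_iff htc (isRegular_regularEnum α)]
      exact ⟨fun h β hβ => (regularEnum_strictMono.monotone hβ).trans_lt h, fun h => h α le_rfl⟩
  | limit o ho ih =>
    rw [dIter_of_isSuccLimit tc ho, mem_iInter₂]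
    refine ⟨fun h β hβ => ?_, fun h γ hγ => (ih γ hγ x).2 fun β hβ => h β (hβ.trans hγ)⟩
    exact (ih _ (ho.add_one_lt hβ) x).1 (h _ (ho.add_one_lt hβ)) β (lt_add_one β)

theorem mem_dIter_iff (htc : IsClubTop Θ tc) {α : Ordinal.{u}} (hα : α ≠ 0) (x : Θ.ToType) :
    x ∈ dIter tc α ↔ regularEnum α ≤ (ordVal x).cof := by
  rw [mem_dIter_iff_forall_lt htc, regularEnum_le_cof_iff hα]

theorem ptRank_eq_sInf (htc : IsClubTop Θ tc) (x : Θ.ToType) :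
    ptRank tc x = sInf {ξ | (ordVal x).cof ≤ regularEnum ξ} := by
  unfold ptRank
  congr 1
  ext ξ
  simp only [mem_dIter_iff_forall_lt htc, Order.lt_add_one_iff, not_forall, not_lt]
  exact ⟨fun ⟨β, hβ, h⟩ => h.trans (regularEnum_strictMono.monotone hβ), fun h => ⟨ξ, le_rfl, h⟩⟩

end clubTop

/-- In the club topology on an ordinal `Θ`, for every nonzero `α` and every
point `ξ < Θ`: `ρ(ξ) = α` iff `cf(ξ) = Ω_α`; equivalently `ξ ∈ d^α(Θ)` iff `cf(ξ) ≥ Ω_α`. -/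
theorem club_rank_eq_iff_cof (Θ : Ordinal.{u}) (tc : TopologicalSpace Θ.ToType)
    (htc : IsClubTop Θ tc) (α : Ordinal.{u}) (hα : α ≠ 0) :
    (∀ x : Θ.ToType, ptRank tc x = α ↔ Ordinal.cof (ordVal x) = regularEnum α) ∧
      (∀ x : Θ.ToType, x ∈ dIter tc α ↔ regularEnum α ≤ Ordinal.cof (ordVal x)) :=
  ⟨fun x => by rw [ptRank_eq_sInf htc, sInf_setOf_cof_le_regularEnum_eq_iff _ hα],
    mem_dIter_iff htc hα⟩

end
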